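/- arXiv:1705.08983 — 8 statements merged into one kernel-verified Lean document; each statement's English description precedes it below -/
import Mathlib

section
/- Let F_1, ..., F_N : ℝ^n → ℝ^n be arbitrary maps and μ_1, ..., μ_N > 0 with ∑_{i=1}^N μ_i = 1. A point (x*, u*) ∈ ℝ^n × (ℝ^n)^N solves the consensus equilibrium equations if and only if the point v* = x̂* + u* ∈ (ℝ^n)^N satisfies v̄*_μ = x* and F(v*) = G_μ(v*). -/
/-- Theorem 2 of the paper.
For arbitrary maps `F i : ℝ^n → ℝ^n` and weights `μ i > 0` summing to one, a point
`(x*, u*)` solves the consensus equilibrium equations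
`F i (x* + u i) = x*` for all `i` and `∑ i, μ i • u i = 0`
if and only if the point `v* = x̂* + u*` (i.e. `v* i = x* + u* i`) satisfies
`v̄*_μ = x*` and `F(v*) = G_μ(v*)`, i.e. `F i (v* i)` equals the weighted average
`∑ j, μ j • v* j` for every `i`. -/
theorem consensus_equilibrium_iff_F_eq_G
    {n N : ℕ}
    (F : Fin N → EuclideanSpace ℝ (Fin n) → EuclideanSpace ℝ (Fin n))
    (μ : Fin N → ℝ) (hμ : ∀ i, 0 < μ i) (hμsum : ∑ i, μ i = 1)
    (xstar : EuclideanSpace ℝ (Fin n)) (ustar : Fin N → EuclideanSpace ℝ (Fin n)) :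
    ((∀ i, F i (xstar + ustar i) = xstar) ∧ ∑ i, μ i • ustar i = 0) ↔
      ((∑ j, μ j • (xstar + ustar j)) = xstar ∧
        ∀ i, F i (xstar + ustar i) = ∑ j, μ j • (xstar + ustar j)) := by
  have key : ∑ j, μ j • (xstar + ustar j) = xstar + ∑ j, μ j • ustar j := by
    simp [smul_add, Finset.sum_add_distrib, ← Finset.sum_smul, hμsum]
  constructor
  · rintro ⟨hF, hsum⟩
    have havg : ∑ j, μ j • (xstar + ustar j) = xstar := by rw [key, hsum, add_zero]
    exact ⟨havg, fun i => by rw [hF i, havg]⟩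
  · rintro ⟨havg, hF⟩
    have hsum : ∑ i, μ i • ustar i = 0 := by
      have := havg
      rw [key] at this
      simpa using this
    exact ⟨fun i => by rw [hF i, havg], hsum⟩
end

section
/- Let F_1, ..., F_N : ℝ^n → ℝ^n be arbitrary maps and μ_1, ..., μ_N > 0 with ∑_{i=1}^N μ_i = 1. A point (x*, u*) ∈ ℝ^n × (ℝ^n)^N solves the consensus equilibrium equations if and only if the point v* = x̂* + u* ∈ (ℝ^n)^N satisfies v̄*_μ = x* and (2G_μ − I)(2F − I)(v*) = v*, where I denotes the identity map on (ℝ^n)^N. -/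
/-- Corollary 3 of the paper: consensus equilibrium as fixed point.
For arbitrary maps `F i : ℝ^n → ℝ^n` and weights `μ i > 0` summing to one, a point
`(x*, u*)` solves the consensus equilibrium equations
`F i (x* + u i) = x*` for all `i` and `∑ i, μ i • u i = 0`
if and only if the point `v* = x̂* + u*` (i.e. `v* i = x* + u* i`) satisfies
`v̄*_μ = x*` and `(2G_μ − I)(2F − I)(v*) = v*`, where
`F(v) i = F i (v i)` and `G_μ(v) i = ∑ j, μ j • v j`. -/
theorem consensus_equilibrium_iff_fixed_point
    {n N : ℕ}
    (F : Fin N → EuclideanSpace ℝ (Fin n) → EuclideanSpace ℝ (Fin n))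
    (μ : Fin N → ℝ) (hμ : ∀ i, 0 < μ i) (hμsum : ∑ i, μ i = 1)
    (xstar : EuclideanSpace ℝ (Fin n)) (ustar : Fin N → EuclideanSpace ℝ (Fin n)) :
    ((∀ i, F i (xstar + ustar i) = xstar) ∧ ∑ i, μ i • ustar i = 0) ↔
      ((∑ j, μ j • (xstar + ustar j)) = xstar ∧
        ∀ i,
          (2:ℝ) • (∑ j, μ j • ((2:ℝ) • F j (xstar + ustar j) - (xstar + ustar j)))
              - ((2:ℝ) • F i (xstar + ustar i) - (xstar + ustar i))
            = xstar + ustar i) := by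
  have hsum : ∑ j, μ j • (xstar + ustar j) = xstar + ∑ j, μ j • ustar j := by
    simp [smul_add, Finset.sum_add_distrib, ← Finset.sum_smul, hμsum]
  constructor
  · rintro ⟨h1, h2⟩
    have hbar : (∑ j, μ j • (xstar + ustar j)) = xstar := by
      rw [hsum, h2, add_zero]
    refine ⟨hbar, fun i => ?_⟩
    have hS : ∑ j, μ j • ((2:ℝ) • F j (xstar + ustar j) - (xstar + ustar j)) = xstar := by
      have : ∀ j, (2:ℝ) • F j (xstar + ustar j) - (xstar + ustar j)
          = xstar - ustar j := by
        intro j; rw [h1 j]; module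
      simp only [this, smul_sub, Finset.sum_sub_distrib, ← Finset.sum_smul, hμsum,
        one_smul, h2, sub_zero]
    rw [hS, h1 i]; module
  · rintro ⟨hbar, hfix⟩
    set S := ∑ j, μ j • ((2:ℝ) • F j (xstar + ustar j) - (xstar + ustar j)) with hSdef
    have hkey : S = xstar := by
      have e1 : ∑ i, μ i • ((2:ℝ) • S - ((2:ℝ) • F i (xstar + ustar i) - (xstar + ustar i)))
          = xstar := by
        calc ∑ i, μ i • ((2:ℝ) • S - ((2:ℝ) • F i (xstar + ustar i) - (xstar + ustar i)))
            = ∑ i, μ i • (xstar + ustar i) :=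
              Finset.sum_congr rfl fun i _ => by rw [hfix i]
          _ = xstar := hbar
      have e2 : ∑ i, μ i • ((2:ℝ) • S - ((2:ℝ) • F i (xstar + ustar i) - (xstar + ustar i)))
          = (2:ℝ) • S - S := by
        simp only [smul_sub, Finset.sum_sub_distrib, ← Finset.sum_smul, hμsum, one_smul]
        simp only [hSdef, smul_sub, Finset.sum_sub_distrib]
      rw [e2] at e1
      have : S = (2:ℝ) • S - S := by module
      rw [this, e1]
    have hF : ∀ i, F i (xstar + ustar i) = xstar := by
      intro i
      have := hfix i
      rw [hkey] at this
      have h2 : (2:ℝ) • F i (xstar + ustar i) = (2:ℝ) • xstar := by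
        have : (2:ℝ) • xstar - ((2:ℝ) • F i (xstar + ustar i) - (xstar + ustar i))
            = xstar + ustar i := this
        linear_combination (norm := module) -this
      exact smul_right_injective _ (two_ne_zero) h2
    refine ⟨hF, ?_⟩
    have := hsum
    rw [hbar] at this
    exact (add_right_injective xstar ((add_zero xstar).trans this)).symm
end

section
/- Let H be a symmetric positive definite m × m real matrix whose largest eigenvalue is strictly less than 1, and let T : ℝ^m → ℝ^m be nonexpansive (1-Lipschitz with respect to the Euclidean norm) with at least one fixed point. For any v^0 ∈ ℝ^m, define the sequence v^{k+1} = (I − H) v^k + H T(v^k) for k ≥ 0. Then the sequence (v^k) converges to a fixed point of T. -/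
/-!
Let `q` be the squared norm induced by `H⁻¹`, i.e. `q x = ∑ ⟪bᵢ, x⟫² / λᵢ` in an orthonormal
eigenbasis of `H`. For a fixed point `w` of `T`, writing `u = vᵏ - w` and `r = T vᵏ - vᵏ`, one step
of the iteration gives `q (u + H r) = q u + 2⟪u, r⟫ + ⟪H r, r⟫`. Nonexpansiveness of `T` yields
`2⟪u, r⟫ ≤ -‖r‖²`, and `⟪H r, r⟫ ≤ ρ ‖r‖²` for any bound `ρ < 1` on the eigenvalues, so
`q (vᵏ - w)` decreases by at least `(1 - ρ) ‖r‖²` at each step. Hence the residuals tend to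
zero and the iterates are bounded; a cluster point `a` is then a fixed point, and since
`q (vᵏ - a)` is decreasing and tends to zero along a subsequence, the whole sequence converges
to `a`.
-/

open Filter Topology Function Metric
open scoped RealInnerProductSpace

lemma exists_lt_one_forall_le {ι : Type*} [Finite ι] {f : ι → ℝ} (hf : ∀ i, f i < 1) :
    ∃ ρ < 1, ∀ i, f i ≤ ρ := by
  have h : ∀ᶠ ρ in 𝓝[<] (1 : ℝ), ∀ i, f i ≤ ρ :=
    nhdsWithin_le_nhds <|
      eventually_all.2 fun i => (eventually_gt_nhds (hf i)).mono fun _ => le_of_lt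
  obtain ⟨ρ, hρ, hρ1⟩ := (h.and self_mem_nhdsWithin).exists
  exact ⟨ρ, hρ1, hρ⟩

lemma tendsto_zero_of_add_le_of_bddBelow {a e : ℕ → ℝ} (he : ∀ k, 0 ≤ e k)
    (hae : ∀ k, a (k + 1) + e k ≤ a k) (ha : BddBelow (Set.range a)) :
    Tendsto e atTop (𝓝 0) := by
  have hanti : Antitone a := antitone_nat_of_succ_le fun k => by linarith [he k, hae k]
  have hlim := tendsto_atTop_ciInf hanti ha
  have hdiff : Tendsto (fun k => a k - a (k + 1)) atTop (𝓝 0) := by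
    simpa using hlim.sub (hlim.comp (tendsto_add_atTop_nat 1))
  exact squeeze_zero he (fun k => by linarith [hae k]) hdiff

lemma tendsto_zero_of_mul_norm_sq_le {α E : Type*} [SeminormedAddCommGroup E] {l : Filter α}
    {y : α → E} {s : α → ℝ} {c : ℝ} (hc : 0 < c) (hle : ∀ k, c * ‖y k‖ ^ 2 ≤ s k)
    (hs : Tendsto s l (𝓝 0)) : Tendsto y l (𝓝 0) := by
  rw [tendsto_zero_iff_norm_tendsto_zero]
  have hsq : Tendsto (fun k => ‖y k‖ ^ 2) l (𝓝 0) :=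
    squeeze_zero (fun _ => by positivity) (fun k => (le_div_iff₀' hc).2 (hle k))
      (by simpa using hs.div_const c)
  simpa [Real.sqrt_sq (norm_nonneg _)] using hsq.sqrt

lemma isFixedPt_of_tendsto_of_tendsto_sub {α E : Type*} [TopologicalSpace E] [AddCommGroup E]
    [IsTopologicalAddGroup E] [T2Space E] {T : E → E} {a : E} {l : Filter α} [l.NeBot]
    {x : α → E} (hT : ContinuousAt T a) (hx : Tendsto x l (𝓝 a))
    (hres : Tendsto (fun n => T (x n) - x n) l (𝓝 0)) : IsFixedPt T a := by
  have hTx : Tendsto (fun n => T (x n)) l (𝓝 a) := by simpa using hres.add hx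
  exact tendsto_nhds_unique (hT.tendsto.comp hx) hTx

section Lyapunov

variable {E : Type*} [NormedAddCommGroup E] {T : E → E} {q : E → ℝ} {c δ : ℝ} {x : ℕ → E}
  {w : E}

lemma antitone_of_lyapunov_step (hδ : 0 ≤ δ)
    (hstep : ∀ k, q (x (k + 1) - w) + δ * ‖T (x k) - x k‖ ^ 2 ≤ q (x k - w)) :
    Antitone fun k => q (x k - w) :=
  antitone_nat_of_succ_le fun k => (le_add_of_nonneg_right (by positivity)).trans (hstep k)

lemma tendsto_sub_zero_of_lyapunov_step (hc : 0 < c) (hδ : 0 < δ)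
    (hq : ∀ y, c * ‖y‖ ^ 2 ≤ q y)
    (hstep : ∀ k, q (x (k + 1) - w) + δ * ‖T (x k) - x k‖ ^ 2 ≤ q (x k - w)) :
    Tendsto (fun k => T (x k) - x k) atTop (𝓝 0) :=
  tendsto_zero_of_mul_norm_sq_le hδ (fun _ => le_rfl) <|
    tendsto_zero_of_add_le_of_bddBelow (fun _ => by positivity) hstep
      ⟨0, by rintro _ ⟨k, rfl⟩; exact (by positivity : 0 ≤ c * ‖x k - w‖ ^ 2).trans (hq _)⟩

lemma exists_subseq_tendsto_of_lyapunov_antitone [ProperSpace E] (hc : 0 < c)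
    (hq : ∀ y, c * ‖y‖ ^ 2 ≤ q y) (hanti : Antitone fun k => q (x k - w)) :
    ∃ a, ∃ φ : ℕ → ℕ, StrictMono φ ∧ Tendsto (x ∘ φ) atTop (𝓝 a) := by
  have hbound : ∀ k, x k ∈ closedBall w √(q (x 0 - w) / c) := fun k => by
    rw [mem_closedBall, dist_eq_norm]
    refine Real.le_sqrt_of_sq_le ((le_div_iff₀' hc).2 ?_)
    exact (hq _).trans (hanti (Nat.zero_le k))
  obtain ⟨a, -, φ, hφ, hlim⟩ := tendsto_subseq_of_bounded isBounded_closedBall hbound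
  exact ⟨a, φ, hφ, hlim⟩

theorem exists_tendsto_isFixedPt_of_lyapunov [ProperSpace E] (hT : Continuous T) (hc : 0 < c)
    (hδ : 0 < δ) (hq : ∀ y, c * ‖y‖ ^ 2 ≤ q y) (hq0 : Tendsto q (𝓝 0) (𝓝 0))
    (hstep : ∀ w, IsFixedPt T w → ∀ k,
      q (x (k + 1) - w) + δ * ‖T (x k) - x k‖ ^ 2 ≤ q (x k - w))
    (hfix : ∃ w, IsFixedPt T w) : ∃ a, IsFixedPt T a ∧ Tendsto x atTop (𝓝 a) := by
  obtain ⟨w, hw⟩ := hfix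
  have hanti := fun w hw => antitone_of_lyapunov_step hδ.le (hstep w hw)
  obtain ⟨a, φ, hφ, hxφ⟩ := exists_subseq_tendsto_of_lyapunov_antitone hc hq (hanti w hw)
  have ha : IsFixedPt T a := isFixedPt_of_tendsto_of_tendsto_sub hT.continuousAt hxφ
    ((tendsto_sub_zero_of_lyapunov_step hc hδ hq (hstep w hw)).comp hφ.tendsto_atTop)
  have hqa : Tendsto (fun k => q (x k - a)) atTop (𝓝 0) :=
    (tendsto_iff_tendsto_subseq_of_antitone (hanti a ha) hφ.tendsto_atTop).2
      (hq0.comp (tendsto_sub_nhds_zero_iff.2 hxφ))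
  exact ⟨a, ha,
    tendsto_sub_nhds_zero_iff.1 (tendsto_zero_of_mul_norm_sq_le hc (fun _ => hq _) hqa)⟩

end Lyapunov

lemma two_inner_le_neg_norm_sq {E : Type*} [NormedAddCommGroup E] [InnerProductSpace ℝ E]
    {u r : E} (h : ‖u + r‖ ≤ ‖u‖) : 2 * ⟪u, r⟫ ≤ -‖r‖ ^ 2 := by
  have hsq := pow_le_pow_left₀ (norm_nonneg _) h 2
  rw [norm_add_sq_real] at hsq
  linarith

section WeightedSqNorm

variable {ι E : Type*} [Fintype ι] [NormedAddCommGroup E] [InnerProductSpace ℝ E]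
  (b : OrthonormalBasis ι ℝ E)

noncomputable def weightedSqNorm (w : ι → ℝ) (x : E) : ℝ := ∑ i, w i * ⟪b i, x⟫ ^ 2

variable {b}

lemma weightedSqNorm_le {w : ι → ℝ} {C : ℝ} (hw : ∀ i, w i ≤ C) (x : E) :
    weightedSqNorm b w x ≤ C * ‖x‖ ^ 2 := by
  rw [weightedSqNorm, ← b.sum_sq_inner_right, Finset.mul_sum]
  gcongr with i
  exact hw i

lemma le_weightedSqNorm {w : ι → ℝ} {c : ℝ} (hw : ∀ i, c ≤ w i) (x : E) :
    c * ‖x‖ ^ 2 ≤ weightedSqNorm b w x := by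
  rw [weightedSqNorm, ← b.sum_sq_inner_right, Finset.mul_sum]
  gcongr with i
  exact hw i

lemma tendsto_weightedSqNorm_zero (w : ι → ℝ) :
    Tendsto (weightedSqNorm b w) (𝓝 0) (𝓝 0) := by
  have hcont : Continuous (weightedSqNorm b w) := by unfold weightedSqNorm; fun_prop
  simpa [weightedSqNorm] using hcont.tendsto 0

variable {L : E →ₗ[ℝ] E} {lam : ι → ℝ}

lemma inner_apply_of_apply_eq_smul (hL : L.IsSymmetric) {i : ι} (hLb : L (b i) = lam i • b i)
    (r : E) : ⟪b i, L r⟫ = lam i * ⟪b i, r⟫ := by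
  rw [← hL, hLb, real_inner_smul_left]

lemma weightedSqNorm_inv_add_apply (hL : L.IsSymmetric) (hLb : ∀ i, L (b i) = lam i • b i)
    (hlam : ∀ i, lam i ≠ 0) (u r : E) :
    weightedSqNorm b lam⁻¹ (u + L r) =
      weightedSqNorm b lam⁻¹ u + 2 * ⟪u, r⟫ + weightedSqNorm b lam r := by
  simp only [weightedSqNorm, inner_add_right, inner_apply_of_apply_eq_smul hL (hLb _)]
  rw [← b.sum_inner_mul_inner u r, Finset.mul_sum, ← Finset.sum_add_distrib,
    ← Finset.sum_add_distrib]
  refine Finset.sum_congr rfl fun i _ => ?_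
  rw [real_inner_comm u (b i), Pi.inv_apply]
  field_simp [hlam i]
  ring

lemma weightedSqNorm_mann_step {ρ : ℝ} (hL : L.IsSymmetric) (hLb : ∀ i, L (b i) = lam i • b i)
    (hlam : ∀ i, 0 < lam i) (hρ : ∀ i, lam i ≤ ρ) {T : E → E}
    (hT : ∀ x y, ‖T x - T y‖ ≤ ‖x - y‖) {w : E} (hw : IsFixedPt T w) (x : E) :
    weightedSqNorm b lam⁻¹ (x + L (T x - x) - w) + (1 - ρ) * ‖T x - x‖ ^ 2 ≤
      weightedSqNorm b lam⁻¹ (x - w) := by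
  have hsplit : x + L (T x - x) - w = (x - w) + L (T x - x) := by abel
  have hnonexp : ‖(x - w) + (T x - x)‖ ≤ ‖x - w‖ := by
    simpa [hw.eq] using hT x w
  rw [hsplit, weightedSqNorm_inv_add_apply hL hLb (fun i => (hlam i).ne')]
  linarith [two_inner_le_neg_norm_sq hnonexp, weightedSqNorm_le (b := b) hρ (T x - x)]

end WeightedSqNorm

lemma Matrix.IsHermitian.toEuclideanLin_eigenvectorBasis {n : Type*} [Fintype n]
    [DecidableEq n] {A : Matrix n n ℝ} (hA : A.IsHermitian) (i : n) :
    A.toEuclideanLin (hA.eigenvectorBasis i) = hA.eigenvalues i • hA.eigenvectorBasis i := by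
  ext j
  simpa using congrFun (hA.mulVec_eigenvectorBasis i) j

/-- Theorem 4 of the paper: anisotropic preconditioned Mann iteration.
Let `H` be a symmetric positive definite `m × m` real matrix whose eigenvalues are all
strictly less than `1`, and let `T : ℝ^m → ℝ^m` be nonexpansive with at least one fixed
point.  Then for any initial point `v 0`, the iteration
`v (k+1) = (I − H) (v k) + H (T (v k))` converges to a fixed point of `T`. -/
theorem preconditioned_mann_converges {m : ℕ}
    (H : Matrix (Fin m) (Fin m) ℝ) (hH : H.PosDef)
    (heig : ∀ i, hH.1.eigenvalues i < 1)
    (T : EuclideanSpace ℝ (Fin m) → EuclideanSpace ℝ (Fin m))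
    (hT : ∀ x y, ‖T x - T y‖ ≤ ‖x - y‖)
    (hfix : ∃ w, T w = w)
    (v : ℕ → EuclideanSpace ℝ (Fin m))
    (hrec : ∀ k, v (k + 1) =
      (v k - Matrix.toEuclideanLin H (v k)) + Matrix.toEuclideanLin H (T (v k))) :
    ∃ w, T w = w ∧ Filter.Tendsto v Filter.atTop (nhds w) := by
  obtain ⟨ρ, hρ1, hρ⟩ := exists_lt_one_forall_le heig
  have hstep : ∀ k, v (k + 1) = v k + Matrix.toEuclideanLin H (T (v k) - v k) := fun k => by
    rw [hrec k, map_sub]; abel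
  have hTcont : Continuous T :=
    (LipschitzWith.of_dist_le_mul (K := 1) fun x y => by
      simpa [dist_eq_norm] using hT x y).continuous
  have hq : ∀ y, 1 * ‖y‖ ^ 2 ≤ weightedSqNorm hH.1.eigenvectorBasis hH.1.eigenvalues⁻¹ y :=
    le_weightedSqNorm fun i => (one_le_inv₀ (hH.eigenvalues_pos i)).2 (heig i).le
  exact exists_tendsto_isFixedPt_of_lyapunov hTcont one_pos (sub_pos.2 hρ1) hq
    (tendsto_weightedSqNorm_zero _)
    (fun w hw k => hstep k ▸ weightedSqNorm_mann_step
      (Matrix.isSymmetric_toEuclideanLin_iff.2 hH.1) hH.1.toEuclideanLin_eigenvectorBasis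
      hH.eigenvalues_pos hρ hT hw (v k)) hfix
end

section
/- Let H be a symmetric positive definite m × m real matrix with all eigenvalues λ_1, ..., λ_m in (0, 1), let T : ℝ^m → ℝ^m be nonexpansive with a fixed point v*, and let c = min_j λ_j(1 − λ_j) > 0. Define v^{k+1} = (I − H) v^k + H T(v^k). Then for every k, ‖v^{k+1} − v*‖²_{H^{-1}} ≤ ‖v^k − v*‖²_{H^{-1}} − c ‖v^k − T(v^k)‖²_{H^{-1}}. -/
/-!
With `e = vᵏ - v*` and `r = vᵏ - T vᵏ` one has `vᵏ⁺¹ - v* = e - H r`, and expanding the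
`H⁻¹`-norm gives `‖vᵏ⁺¹ - v*‖²_{H⁻¹} = ‖e‖²_{H⁻¹} - 2⟪e, r⟫ + ⟪r, H r⟫`. Nonexpansiveness at the
fixed point, `‖e - r‖ = ‖T vᵏ - T v*‖ ≤ ‖e‖`, gives `‖r‖² ≤ 2⟪e, r⟫`, so the decrease is at least
`⟪r, (I - H) r⟫`. Finally `I - H - c H⁻¹ = f(H)` for `f λ = 1 - λ - c/λ ≥ 0` on the spectrum,
so `⟪r, (I - H) r⟫ ≥ c ‖r‖²_{H⁻¹}`.
-/

/-- The weighted squared norm `‖v‖²_{H⁻¹} = vᵀ H⁻¹ v` associated with a symmetric positive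
definite matrix `H`. -/
noncomputable def wnormSq {m : ℕ} (H : Matrix (Fin m) (Fin m) ℝ)
    (v : EuclideanSpace ℝ (Fin m)) : ℝ :=
  inner ℝ v (Matrix.toEuclideanLin H⁻¹ v)

open Matrix
open scoped MatrixOrder RealInnerProductSpace

theorem sq_norm_le_two_inner_of_norm_sub_le {E : Type*} [NormedAddCommGroup E]
    [InnerProductSpace ℝ E] {e r : E} (h : ‖e - r‖ ≤ ‖e‖) : ‖r‖ ^ 2 ≤ 2 * ⟪e, r⟫ := by
  have h2 : ‖e - r‖ ^ 2 ≤ ‖e‖ ^ 2 := pow_le_pow_left₀ (norm_nonneg _) h 2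
  rw [norm_sub_sq_real] at h2
  linarith

theorem LinearMap.IsSymmetric.inner_sub_apply_inverse_sub_apply {E : Type*}
    [NormedAddCommGroup E] [InnerProductSpace ℝ E] {A B : E →ₗ[ℝ] E} (hA : A.IsSymmetric)
    (hBA : Function.LeftInverse B A) (hAB : Function.RightInverse B A) (e r : E) :
    ⟪e - A r, B (e - A r)⟫ = ⟪e, B e⟫ - 2 * ⟪e, r⟫ + ⟪r, A r⟫ := by
  rw [map_sub, hBA, inner_sub_left, inner_sub_right, inner_sub_right, hA, hAB,
    real_inner_comm r e, real_inner_comm r (A r)]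
  ring

section

variable {n : Type*} [Fintype n] [DecidableEq n]

theorem Matrix.leftInverse_toEuclideanLin_inv {H : Matrix n n ℝ} (hH : IsUnit H.det) :
    Function.LeftInverse (toEuclideanLin H⁻¹) (toEuclideanLin H) := fun x => by
  simp [toLpLin_apply, mulVec_mulVec, nonsing_inv_mul H hH]

theorem Matrix.rightInverse_toEuclideanLin_inv {H : Matrix n n ℝ} (hH : IsUnit H.det) :
    Function.RightInverse (toEuclideanLin H⁻¹) (toEuclideanLin H) := fun x => by
  simp [toLpLin_apply, mulVec_mulVec, mul_nonsing_inv H hH]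

theorem Matrix.PosDef.posSemidef_one_sub_sub_smul_inv {H : Matrix n n ℝ} (hH : H.PosDef)
    {c : ℝ} (hc : ∀ j, c ≤ hH.1.eigenvalues j * (1 - hH.1.eigenvalues j)) :
    (1 - H - c • H⁻¹).PosSemidef := by
  have hspec := hH.1.spectrum_real_eq_range_eigenvalues
  have hpos : ∀ x ∈ spectrum ℝ H, 0 < x := by
    rw [hspec]; rintro _ ⟨j, rfl⟩; exact hH.eigenvalues_pos j
  have hinv : ContinuousOn (fun x : ℝ => x⁻¹) (spectrum ℝ H) :=
    continuousOn_inv₀.mono fun x hx => (hpos x hx).ne'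
  have hcfc : cfc (fun x : ℝ => 1 - x - c * x⁻¹) H = 1 - H - c • H⁻¹ := by
    rw [cfc_sub (fun x : ℝ => 1 - x) (fun x => c * x⁻¹) H,
      cfc_sub (fun _ : ℝ => 1) (fun x => x) H, cfc_const_one ℝ H, cfc_id' ℝ H,
      cfc_const_mul c _ H, cfc_ringInverse_id H hH.isUnit, ← nonsing_inv_eq_ringInverse]
  rw [← hcfc, ← nonneg_iff_posSemidef]
  refine cfc_nonneg fun x hx => ?_
  obtain ⟨j, rfl⟩ := hspec ▸ hx
  have h : c * (hH.1.eigenvalues j)⁻¹ ≤ 1 - hH.1.eigenvalues j := by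
    rw [← div_eq_mul_inv, div_le_iff₀ (hH.eigenvalues_pos j)]
    linarith [hc j]
  linarith

theorem Matrix.PosDef.mul_inner_inv_le {H : Matrix n n ℝ} (hH : H.PosDef) {c : ℝ}
    (hc : ∀ j, c ≤ hH.1.eigenvalues j * (1 - hH.1.eigenvalues j)) (r : EuclideanSpace ℝ n) :
    c * ⟪r, toEuclideanLin H⁻¹ r⟫ ≤ ‖r‖ ^ 2 - ⟪r, toEuclideanLin H r⟫ := by
  have h := (isPositive_toEuclideanLin_iff.mpr
    (hH.posSemidef_one_sub_sub_smul_inv hc)).inner_nonneg_right r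
  rw [map_sub, map_sub, map_smul, toLpLin_one] at h
  simp only [LinearMap.sub_apply, LinearMap.smul_apply, LinearMap.id_apply, inner_sub_right,
    inner_smul_right, real_inner_self_eq_norm_sq] at h
  linarith

end

theorem preconditioned_mann_descent_general {m : ℕ}
    (H : Matrix (Fin m) (Fin m) ℝ) (hH : H.PosDef)
    (T : EuclideanSpace ℝ (Fin m) → EuclideanSpace ℝ (Fin m))
    (hT : ∀ x y, ‖T x - T y‖ ≤ ‖x - y‖)
    (vstar : EuclideanSpace ℝ (Fin m)) (hfix : T vstar = vstar)
    (c : ℝ)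
    (hc : IsLeast (Set.range fun j => hH.1.eigenvalues j * (1 - hH.1.eigenvalues j)) c)
    (v : ℕ → EuclideanSpace ℝ (Fin m))
    (hrec : ∀ k, v (k + 1) =
      (v k - Matrix.toEuclideanLin H (v k)) + Matrix.toEuclideanLin H (T (v k))) :
    ∀ k, wnormSq H (v (k + 1) - vstar) ≤
      wnormSq H (v k - vstar) - c * wnormSq H (v k - T (v k)) := by
  intro k
  set e := v k - vstar
  set r := v k - T (v k)
  have hstep : v (k + 1) - vstar = e - toEuclideanLin H r := by
    rw [hrec k, map_sub]; simp only [e]; abel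
  have hr : ‖r‖ ^ 2 ≤ 2 * ⟪e, r⟫ := by
    refine sq_norm_le_two_inner_of_norm_sub_le ?_
    rw [show e - r = T (v k) - T vstar by simp only [e, r, hfix]; abel]
    exact hT _ _
  have hdet := hH.isUnit.map detMonoidHom
  have hexpand := (isSymmetric_toEuclideanLin_iff.mpr hH.1).inner_sub_apply_inverse_sub_apply
    (leftInverse_toEuclideanLin_inv hdet) (rightInverse_toEuclideanLin_inv hdet) e r
  have hcr := hH.mul_inner_inv_le (fun j => hc.2 ⟨j, rfl⟩) r
  simp only [wnormSq, hstep, hexpand]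
  linarith

/-- Let `H` be a symmetric positive definite `m × m` real matrix with all
eigenvalues `λ_j ∈ (0,1)`, let `T` be nonexpansive with fixed point `v*`, and let
`c = min_j λ_j (1 − λ_j) > 0`.  For the iteration `v (k+1) = (I − H) v k + H T(v k)` one has,
for every `k`,
`‖v^{k+1} − v*‖²_{H⁻¹} ≤ ‖v^k − v*‖²_{H⁻¹} − c ‖v^k − T v^k‖²_{H⁻¹}`. -/
theorem preconditioned_mann_descent {m : ℕ}
    (H : Matrix (Fin m) (Fin m) ℝ) (hH : H.PosDef)
    (heig : ∀ i, hH.1.eigenvalues i ∈ Set.Ioo (0:ℝ) 1)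
    (T : EuclideanSpace ℝ (Fin m) → EuclideanSpace ℝ (Fin m))
    (hT : ∀ x y, ‖T x - T y‖ ≤ ‖x - y‖)
    (vstar : EuclideanSpace ℝ (Fin m)) (hfix : T vstar = vstar)
    (c : ℝ)
    (hc : IsLeast (Set.range fun j => hH.1.eigenvalues j * (1 - hH.1.eigenvalues j)) c)
    (v : ℕ → EuclideanSpace ℝ (Fin m))
    (hrec : ∀ k, v (k + 1) =
      (v k - Matrix.toEuclideanLin H (v k)) + Matrix.toEuclideanLin H (T (v k))) :
    ∀ k, wnormSq H (v (k + 1) - vstar) ≤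
      wnormSq H (v k - vstar) - c * wnormSq H (v k - T (v k)) :=
  preconditioned_mann_descent_general H hH T hT vstar hfix c hc v hrec
end

section
/- Let H be a symmetric positive definite m × m real matrix with all eigenvalues λ_1, ..., λ_m in (0, 1), let T : ℝ^m → ℝ^m be nonexpansive with a fixed point v*, and let c = min_j λ_j(1 − λ_j) > 0. Define v^{k+1} = (I − H) v^k + H T(v^k) starting from any v^1. Then for every k ≥ 1, min_{j=1,...,k} ‖v^j − T(v^j)‖²_{H^{-1}} ≤ (1/(c k)) ‖v^1 − v*‖²_{H^{-1}}. -/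
/-!
Write `x = v − v*` and `r = v − T v`; one step maps `x` to `x − H r`, so
`‖x − H r‖²_{H⁻¹} = ‖x‖²_{H⁻¹} − 2⟪x, r⟫ + ⟪r, H r⟫`. Nonexpansiveness of `T` at its fixed point
(`‖x − r‖ ≤ ‖x‖`) gives `‖r‖² ≤ 2⟪x, r⟫`, and `λ(1 − λ) ≥ c` on the spectrum of `H` means
`I − H − c H⁻¹ ⪰ 0`, i.e. `‖r‖² − ⟪r, H r⟫ ≥ c ‖r‖²_{H⁻¹}`. So every step lowers
`‖v − v*‖²_{H⁻¹}` by at least `c ‖r‖²_{H⁻¹}`; telescoping over `k` steps and bounding the minimum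
by the average gives the claim.
-/

open Matrix
open scoped MatrixOrder InnerProductSpace

namespace Matrix
variable {n : Type*} [Fintype n] [DecidableEq n]

theorem PosDef.posSemidef_one_sub_sub_smul_inv_s7 {H : Matrix n n ℝ} (hH : H.PosDef) {c : ℝ}
    (hc : ∀ i, c ≤ hH.1.eigenvalues i * (1 - hH.1.eigenvalues i)) :
    (1 - H - c • H⁻¹).PosSemidef := by
  have hsa : IsSelfAdjoint H := hH.1
  have hspec : ∀ x ∈ spectrum ℝ H, ∃ i, hH.1.eigenvalues i = x := fun x hx => by
    rwa [hH.1.spectrum_real_eq_range_eigenvalues] at hx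
  have hcont : ContinuousOn (fun x : ℝ => x⁻¹) (spectrum ℝ H) :=
    continuousOn_inv₀.mono fun x hx => by
      obtain ⟨i, rfl⟩ := hspec x hx
      exact (hH.eigenvalues_pos i).ne'
  have hcfc : 1 - H - c • H⁻¹ = cfc (fun x : ℝ => 1 - x - c * x⁻¹) H := by
    rw [cfc_sub .., cfc_sub .., cfc_const_mul .., cfc_ringInverse_id (R := ℝ) _ hH.isUnit,
      cfc_const_one .., cfc_id' .., nonsing_inv_eq_ringInverse]
  rw [hcfc, ← nonneg_iff_posSemidef]
  refine cfc_nonneg fun x hx => ?_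
  obtain ⟨i, rfl⟩ := hspec x hx
  have hpos := hH.eigenvalues_pos i
  have := hc i
  rw [sub_nonneg, mul_inv_le_iff₀ hpos]
  nlinarith

theorem toEuclideanLin_inv_apply_apply {H : Matrix n n ℝ} (hdet : IsUnit H.det)
    (x : EuclideanSpace ℝ n) : toEuclideanLin H⁻¹ (toEuclideanLin H x) = x := by
  rw [← LinearMap.comp_apply, ← toLpLin_mul, nonsing_inv_mul H hdet, toLpLin_one,
    LinearMap.id_apply]

end Matrix

theorem norm_sq_le_two_mul_inner_of_norm_sub_le {F : Type*} [NormedAddCommGroup F]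
    [InnerProductSpace ℝ F] {x r : F} (h : ‖x - r‖ ≤ ‖x‖) : ‖r‖ ^ 2 ≤ 2 * ⟪x, r⟫_ℝ := by
  have := pow_le_pow_left₀ (norm_nonneg _) h 2
  rw [norm_sub_sq_real] at this
  linarith

section wnormSq

variable {m : ℕ} {H : Matrix (Fin m) (Fin m) ℝ}

theorem wnormSq_nonneg (hH : H.PosDef) (x : EuclideanSpace ℝ (Fin m)) : 0 ≤ wnormSq H x := by
  simpa [wnormSq, real_inner_comm] using
    (isPositive_toEuclideanLin_iff.mpr hH.inv.posSemidef).2 x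

theorem wnormSq_sub_toEuclideanLin_apply (hH : H.IsHermitian) (hdet : IsUnit H.det)
    (x r : EuclideanSpace ℝ (Fin m)) :
    wnormSq H (x - toEuclideanLin H r) =
      wnormSq H x - 2 * ⟪x, r⟫_ℝ + ⟪r, toEuclideanLin H r⟫_ℝ := by
  have hcross : ⟪toEuclideanLin H r, toEuclideanLin H⁻¹ x⟫_ℝ = ⟪x, r⟫_ℝ := by
    rw [← isSymmetric_toEuclideanLin_iff.mpr hH.inv, toEuclideanLin_inv_apply_apply hdet,
      real_inner_comm]
  simp only [wnormSq, map_sub, toEuclideanLin_inv_apply_apply hdet, inner_sub_left,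
    inner_sub_right, hcross, real_inner_comm r]
  ring

theorem mul_wnormSq_le (hH : H.PosDef) {c : ℝ}
    (hc : ∀ i, c ≤ hH.1.eigenvalues i * (1 - hH.1.eigenvalues i))
    (x : EuclideanSpace ℝ (Fin m)) :
    c * wnormSq H x ≤ ‖x‖ ^ 2 - ⟪x, toEuclideanLin H x⟫_ℝ := by
  have := (isPositive_toEuclideanLin_iff.mpr (hH.posSemidef_one_sub_sub_smul_inv_s7 hc)).2 x
  simp only [map_sub, map_smul, toLpLin_one, LinearMap.sub_apply, LinearMap.smul_apply,
    LinearMap.id_apply, inner_sub_left, real_inner_smul_left, real_inner_self_eq_norm_sq,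
    RCLike.re_to_real] at this
  rw [real_inner_comm x, real_inner_comm x] at this
  rw [wnormSq]
  linarith

theorem wnormSq_mann_step_le (hH : H.PosDef) {c : ℝ}
    (hc : ∀ i, c ≤ hH.1.eigenvalues i * (1 - hH.1.eigenvalues i))
    {T : EuclideanSpace ℝ (Fin m) → EuclideanSpace ℝ (Fin m)}
    (hT : ∀ x y, ‖T x - T y‖ ≤ ‖x - y‖) {vstar : EuclideanSpace ℝ (Fin m)}
    (hfix : T vstar = vstar) (x : EuclideanSpace ℝ (Fin m)) :
    wnormSq H (x - toEuclideanLin H x + toEuclideanLin H (T x) - vstar) +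
        c * wnormSq H (x - T x) ≤ wnormSq H (x - vstar) := by
  have hnext : x - toEuclideanLin H x + toEuclideanLin H (T x) - vstar =
      (x - vstar) - toEuclideanLin H (x - T x) := by
    rw [map_sub]; abel
  have hresidual : ‖x - T x‖ ^ 2 ≤ 2 * ⟪x - vstar, x - T x⟫_ℝ :=
    norm_sq_le_two_mul_inner_of_norm_sub_le (by simpa [hfix] using hT x vstar)
  rw [hnext, wnormSq_sub_toEuclideanLin_apply hH.1 hH.det_pos.ne'.isUnit]
  linarith [mul_wnormSq_le hH hc (x - T x)]

end wnormSq

theorem sum_Icc_add_le_of_descent {a b : ℕ → ℝ} (h : ∀ k, 1 ≤ k → a (k + 1) + b k ≤ a k)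
    (k : ℕ) : ∑ j ∈ Finset.Icc 1 k, b j + a (k + 1) ≤ a 1 := by
  induction k with
  | zero => simp
  | succ k ih =>
    rw [Finset.sum_Icc_succ_top (by omega)]
    linarith [h (k + 1) (by omega)]

theorem inf'_Icc_le_of_descent {a b : ℕ → ℝ} {c : ℝ} (hc : 0 < c) (ha : ∀ k, 0 ≤ a k)
    (h : ∀ k, 1 ≤ k → a (k + 1) + c * b k ≤ a k) (k : ℕ) (hk : 1 ≤ k) :
    (Finset.Icc 1 k).inf' (Finset.nonempty_Icc.mpr hk) b ≤ 1 / (c * k) * a 1 := by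
  have hsum := sum_Icc_add_le_of_descent h k
  have hmin := (Finset.Icc 1 k).card_nsmul_le_sum b
    ((Finset.Icc 1 k).inf' (Finset.nonempty_Icc.mpr hk) b) fun j hj => Finset.inf'_le b hj
  rw [← Finset.mul_sum] at hsum
  rw [Nat.card_Icc, Nat.add_sub_cancel, nsmul_eq_mul] at hmin
  rw [one_div_mul_eq_div, le_div_iff₀ (by positivity)]
  nlinarith [ha (k + 1)]

/-- Let `H` be a symmetric positive definite `m × m` real matrix with all
eigenvalues `λ_j ∈ (0,1)`, let `T` be nonexpansive with fixed point `v*`, and let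
`c = min_j λ_j (1 − λ_j) > 0`.  For the iteration `v (k+1) = (I − H) v k + H T(v k)`
started from any `v 1`, one has for every `k ≥ 1`
`min_{j=1,…,k} ‖v^j − T v^j‖²_{H⁻¹} ≤ (1/(c k)) ‖v^1 − v*‖²_{H⁻¹}`. -/
theorem preconditioned_mann_min_residual {m : ℕ}
    (H : Matrix (Fin m) (Fin m) ℝ) (hH : H.PosDef)
    (heig : ∀ i, hH.1.eigenvalues i ∈ Set.Ioo (0:ℝ) 1)
    (T : EuclideanSpace ℝ (Fin m) → EuclideanSpace ℝ (Fin m))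
    (hT : ∀ x y, ‖T x - T y‖ ≤ ‖x - y‖)
    (vstar : EuclideanSpace ℝ (Fin m)) (hfix : T vstar = vstar)
    (c : ℝ)
    (hc : IsLeast (Set.range fun j => hH.1.eigenvalues j * (1 - hH.1.eigenvalues j)) c)
    (v : ℕ → EuclideanSpace ℝ (Fin m))
    (hrec : ∀ k, 1 ≤ k → v (k + 1) =
      (v k - Matrix.toEuclideanLin H (v k)) + Matrix.toEuclideanLin H (T (v k))) :
    ∀ k (hk : 1 ≤ k),
      (Finset.Icc 1 k).inf' (Finset.nonempty_Icc.mpr hk)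
          (fun j => wnormSq H (v j - T (v j))) ≤
        (1 / (c * k)) * wnormSq H (v 1 - vstar) := by
  have hc_le : ∀ i, c ≤ hH.1.eigenvalues i * (1 - hH.1.eigenvalues i) := fun i => hc.2 ⟨i, rfl⟩
  have hc_pos : 0 < c := by
    obtain ⟨j, rfl⟩ := hc.1
    exact mul_pos (heig j).1 (sub_pos.mpr (heig j).2)
  refine inf'_Icc_le_of_descent (a := fun j => wnormSq H (v j - vstar)) hc_pos
    (fun j => wnormSq_nonneg hH _) fun j hj => ?_
  rw [hrec j hj]
  exact wnormSq_mann_step_le hH hc_le hT hfix (v j)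
end

section
/- Let H be a symmetric positive definite m × m real matrix with all eigenvalues in (0, 1), let T : ℝ^m → ℝ^m be a continuous nonexpansive map with at least one fixed point, and define v^{k+1} = (I − H) v^k + H T(v^k) starting from any v^0. Then ‖v^k − T(v^k)‖ → 0 as k → ∞. -/
/-!
With `w` a fixed point and `r = T v - v`, the step is `v⁺ = v + H r`, and the potential
`Q x = ⟪H⁻¹ (x - w), x - w⟫` satisfies `Q v⁺ = Q v + 2⟪v - w, r⟫ + ⟪H r, r⟫`.
Nonexpansiveness at `w` gives `2⟪v - w, r⟫ ≤ -‖r‖²`, and `⟪H r, r⟫ ≤ μ‖r‖²` for any bound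
`μ < 1` on the eigenvalues of `H`, so `Q` drops by at least `(1 - μ)‖r‖²` per step.
Since `Q ≥ 0`, the squared residuals are summable and therefore tend to zero.
-/

open Filter Topology

lemma summable_of_add_le_of_nonneg {f g : ℕ → ℝ} (hf : ∀ n, 0 ≤ f n) (hg : ∀ n, 0 ≤ g n)
    (h : ∀ n, f (n + 1) + g n ≤ f n) : Summable g := by
  refine summable_of_sum_range_le hg (c := f 0) fun n => ?_
  have : f n + ∑ k ∈ Finset.range n, g k ≤ f 0 := by
    induction n with
    | zero => simp
    | succ n ih => rw [Finset.sum_range_succ]; linarith [h n]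
  linarith [hf n]

lemma exists_lt_forall_le_of_lt {ι : Type*} [Finite ι] {f : ι → ℝ} {a : ℝ} (h : ∀ i, f i < a) :
    ∃ μ < a, ∀ i, f i ≤ μ := by
  have : ∀ᶠ μ in 𝓝[<] a, ∀ i, f i ≤ μ :=
    eventually_all.2 fun i => Eventually.mono (Ioo_mem_nhdsLT (h i)) fun _ hμ => hμ.1.le
  obtain ⟨μ, hμ, hle⟩ := (this.and self_mem_nhdsWithin).exists
  exact ⟨μ, hle, hμ⟩

section InnerProductSpace

variable {E : Type*} [NormedAddCommGroup E] [InnerProductSpace ℝ E]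

lemma two_mul_inner_le_neg_sq_of_norm_add_le {u r : E} (h : ‖u + r‖ ≤ ‖u‖) :
    2 * inner ℝ u r ≤ -‖r‖ ^ 2 := by
  nlinarith [norm_add_sq_real u r, norm_nonneg (u + r)]

lemma LinearMap.IsSymmetric.inner_apply_add_map_of_comp_eq_id {M L : E →ₗ[ℝ] E}
    (hM : M.IsSymmetric) (hML : M ∘ₗ L = LinearMap.id) (u r : E) :
    inner ℝ (M (u + L r)) (u + L r) = inner ℝ (M u) u + 2 * inner ℝ u r + inner ℝ (L r) r := by
  have hMLr : M (L r) = r := LinearMap.congr_fun hML r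
  have hcross : inner ℝ (M u) (L r) = inner ℝ u r := by rw [hM, hMLr]
  rw [map_add, hMLr, inner_add_left, inner_add_right, inner_add_right, hcross,
    real_inner_comm u r, real_inner_comm r (L r)]
  ring

lemma LinearMap.IsSymmetric.inner_apply_self_le_of_eigenbasis {ι : Type*} [Fintype ι]
    {L : E →ₗ[ℝ] E} (hL : L.IsSymmetric) (b : OrthonormalBasis ι ℝ E) {e : ι → ℝ}
    (hb : ∀ i, L (b i) = e i • b i) {μ : ℝ} (hμ : ∀ i, e i ≤ μ) (x : E) :
    inner ℝ (L x) x ≤ μ * ‖x‖ ^ 2 := by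
  have hcoord (i : ι) : inner ℝ (L x) (b i) = e i * inner ℝ x (b i) := by
    rw [hL, hb, real_inner_smul_right]
  calc inner ℝ (L x) x = ∑ i, e i * inner ℝ x (b i) ^ 2 := by
        rw [← b.sum_inner_mul_inner]
        simp only [hcoord, real_inner_comm x, sq, mul_assoc]
    _ ≤ ∑ i, μ * inner ℝ x (b i) ^ 2 :=
        Finset.sum_le_sum fun i _ => mul_le_mul_of_nonneg_right (hμ i) (sq_nonneg _)
    _ = μ * ‖x‖ ^ 2 := by
        rw [← Finset.mul_sum, ← real_inner_self_eq_norm_sq, ← b.sum_inner_mul_inner]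
        simp only [real_inner_comm x, sq]

variable {T : E → E} {w : E} {M L : E →ₗ[ℝ] E} {μ : ℝ}

lemma inner_apply_sub_add_le_of_quasiNonexpansive (hT : ∀ x, ‖T x - w‖ ≤ ‖x - w‖)
    (hM : M.IsSymmetric) (hML : M ∘ₗ L = LinearMap.id) (hL : ∀ x, inner ℝ (L x) x ≤ μ * ‖x‖ ^ 2)
    (x : E) :
    inner ℝ (M (x + L (T x - x) - w)) (x + L (T x - x) - w) + (1 - μ) * ‖T x - x‖ ^ 2 ≤
      inner ℝ (M (x - w)) (x - w) := by
  have hdecomp : x + L (T x - x) - w = (x - w) + L (T x - x) := by abel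
  have hinner : 2 * inner ℝ (x - w) (T x - x) ≤ -‖T x - x‖ ^ 2 :=
    two_mul_inner_le_neg_sq_of_norm_add_le (by simpa using hT x)
  rw [hdecomp, hM.inner_apply_add_map_of_comp_eq_id hML]
  linarith [hL (T x - x)]

theorem tendsto_norm_sub_apply_of_preconditioned (hT : ∀ x, ‖T x - w‖ ≤ ‖x - w‖)
    (hM : M.IsPositive) (hML : M ∘ₗ L = LinearMap.id) (hμ : μ < 1)
    (hL : ∀ x, inner ℝ (L x) x ≤ μ * ‖x‖ ^ 2) {v : ℕ → E}
    (hv : ∀ k, v (k + 1) = v k + L (T (v k) - v k)) :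
    Tendsto (fun k => ‖v k - T (v k)‖) atTop (𝓝 0) := by
  have hsummable : Summable fun k => (1 - μ) * ‖T (v k) - v k‖ ^ 2 :=
    summable_of_add_le_of_nonneg (f := fun k => inner ℝ (M (v k - w)) (v k - w))
      (fun k => hM.2 _) (fun k => by have := sub_pos.2 hμ; positivity) fun k => by
        simpa only [hv] using inner_apply_sub_add_le_of_quasiNonexpansive hT hM.1 hML hL (v k)
  have hsq : Tendsto (fun k => ‖T (v k) - v k‖ ^ 2) atTop (𝓝 0) :=
    ((summable_mul_left_iff (sub_pos.2 hμ).ne').1 hsummable).tendsto_atTop_zero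
  simpa [norm_sub_rev] using hsq.sqrt

end InnerProductSpace

lemma Matrix.IsHermitian.inner_toEuclideanLin_self_le {n : Type*} [Fintype n] [DecidableEq n]
    {A : Matrix n n ℝ} (hA : A.IsHermitian) {μ : ℝ} (hμ : ∀ i, hA.eigenvalues i ≤ μ)
    (x : EuclideanSpace ℝ n) : inner ℝ (A.toEuclideanLin x) x ≤ μ * ‖x‖ ^ 2 :=
  (Matrix.isSymmetric_toEuclideanLin_iff.2 hA).inner_apply_self_le_of_eigenbasis
    hA.eigenvectorBasis (fun i => by ext1; simp [Matrix.toLpLin_apply, hA.mulVec_eigenvectorBasis])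
    hμ x

theorem preconditioned_mann_residual_tendsto_zero_general {m : ℕ}
    (H : Matrix (Fin m) (Fin m) ℝ) (hH : H.PosDef)
    (heig : ∀ i, hH.1.eigenvalues i ∈ Set.Ioo (0:ℝ) 1)
    (T : EuclideanSpace ℝ (Fin m) → EuclideanSpace ℝ (Fin m))
    (hT : ∀ x y, ‖T x - T y‖ ≤ ‖x - y‖)
    (hfix : ∃ w, T w = w)
    (v : ℕ → EuclideanSpace ℝ (Fin m))
    (hrec : ∀ k, v (k + 1) =
      (v k - Matrix.toEuclideanLin H (v k)) + Matrix.toEuclideanLin H (T (v k))) :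
    Filter.Tendsto (fun k => ‖v k - T (v k)‖) Filter.atTop (nhds 0) := by
  obtain ⟨w, hw⟩ := hfix
  obtain ⟨μ, hμ, hle⟩ := exists_lt_forall_le_of_lt fun i => (heig i).2
  have hinv : H⁻¹ * H = 1 := Matrix.nonsing_inv_mul H (isUnit_iff_ne_zero.2 hH.det_pos.ne')
  refine tendsto_norm_sub_apply_of_preconditioned (w := w) (M := H⁻¹.toEuclideanLin)
    (fun x => by simpa [hw] using hT x w)
    (Matrix.isPositive_toEuclideanLin_iff.2 hH.inv.posSemidef)
    (by rw [← Matrix.toLpLin_mul_same, hinv, Matrix.toLpLin_one]) hμ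
    (hH.1.inner_toEuclideanLin_self_le hle) fun k => ?_
  rw [hrec k, map_sub]
  abel

/-- Let `H` be a symmetric positive definite `m × m` real matrix with all
eigenvalues in `(0,1)`, let `T : ℝ^m → ℝ^m` be a continuous nonexpansive map with at least
one fixed point, and define `v (k+1) = (I − H) v k + H T(v k)` starting from any `v 0`.
Then `‖v^k − T(v^k)‖ → 0` as `k → ∞`. -/
theorem preconditioned_mann_residual_tendsto_zero {m : ℕ}
    (H : Matrix (Fin m) (Fin m) ℝ) (hH : H.PosDef)
    (heig : ∀ i, hH.1.eigenvalues i ∈ Set.Ioo (0:ℝ) 1)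
    (T : EuclideanSpace ℝ (Fin m) → EuclideanSpace ℝ (Fin m))
    (hTcont : Continuous T)
    (hT : ∀ x y, ‖T x - T y‖ ≤ ‖x - y‖)
    (hfix : ∃ w, T w = w)
    (v : ℕ → EuclideanSpace ℝ (Fin m))
    (hrec : ∀ k, v (k + 1) =
      (v k - Matrix.toEuclideanLin H (v k)) + Matrix.toEuclideanLin H (T (v k))) :
    Filter.Tendsto (fun k => ‖v k - T (v k)‖) Filter.atTop (nhds 0) :=
  preconditioned_mann_residual_tendsto_zero_general H hH heig T hT hfix v hrec
end

section
/- Let T : ℝ^m → ℝ^m have a fixed point w* and suppose T is differentiable at w*, with the Jacobian of T at w* having (complex) eigenvalues λ_1, ..., λ_m, each with real part strictly less than 1. Then there exist ρ ∈ (0, 1) and an open set U containing w* such that for any initial point w^0 ∈ U, the iterates w^{k+1} = (1 − ρ) w^k + ρ T(w^k) converge to w*. -/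
/-!
The relaxed map `S w = (1 - ρ) • w + ρ • T w` fixes `w*` and has Jacobian `(1 - ρ) I + ρ A`,
whose complex eigenvalues `1 - ρ + ρ μ` lie in the open unit disc for all small `ρ > 0` because
`Re μ < 1`. By Gelfand's formula the powers of this Jacobian tend to `0`, so for some `N` the
derivative of `S^[N]` at `w*` has norm `< 1` and `S^[N]` contracts a small ball towards `w*`.
Continuity of `S^[j]` at `w*` for `j < N` then gives convergence of the whole orbit.
-/

open Filter Topology Metric
open scoped NNReal

theorem tendsto_iterate_of_forall_dist_apply_le {X : Type*} [PseudoMetricSpace X] {f : X → X}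
    {x y : X} {q r : ℝ} (hq₀ : 0 ≤ q) (hq₁ : q < 1)
    (hf : ∀ z ∈ ball x r, dist (f z) x ≤ q * dist z x) (hy : y ∈ ball x r) :
    Tendsto (fun n => f^[n] y) atTop (𝓝 x) := by
  have hdist : ∀ n, dist (f^[n] y) x ≤ q ^ n * dist y x := by
    intro n
    induction n with
    | zero => simp
    | succ n ih =>
      have hmem : f^[n] y ∈ ball x r := by
        refine lt_of_le_of_lt (ih.trans ?_) hy
        exact mul_le_of_le_one_left dist_nonneg (pow_le_one₀ hq₀ hq₁.le)
      calc dist (f^[n + 1] y) x = dist (f (f^[n] y)) x := by rw [Function.iterate_succ_apply']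
        _ ≤ q * (q ^ n * dist y x) := (hf _ hmem).trans (mul_le_mul_of_nonneg_left ih hq₀)
        _ = q ^ (n + 1) * dist y x := by ring
  refine tendsto_iff_dist_tendsto_zero.2 (squeeze_zero (fun _ => dist_nonneg) hdist ?_)
  simpa using (tendsto_pow_atTop_nhds_zero_of_lt_one hq₀ hq₁).mul_const (dist y x)

theorem Filter.tendsto_of_forall_tendsto_mul_add {X : Type*} {u : ℕ → X} {l : Filter X} {N : ℕ}
    (hN : N ≠ 0) (h : ∀ j < N, Tendsto (fun k => u (N * k + j)) atTop l) :
    Tendsto u atTop l := by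
  refine tendsto_def.2 fun s hs => ?_
  have hall : ∀ᶠ k in atTop, ∀ j < N, u (N * k + j) ∈ s :=
    (eventually_all_finite (Set.finite_lt_nat N)).2 fun j hj => h j hj hs
  filter_upwards [(Nat.tendsto_div_const_atTop hN).eventually hall] with n hn
  simpa only [Set.mem_preimage, Nat.div_add_mod] using
    hn (n % N) (Nat.mod_lt n (Nat.pos_of_ne_zero hN))

section LocalAttraction

variable {𝕜 E : Type*} [NontriviallyNormedField 𝕜] [NormedAddCommGroup E] [NormedSpace 𝕜 E]
  {f : E → E} {f' : E →L[𝕜] E} {x : E}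

theorem HasFDerivAt.exists_forall_dist_apply_le_of_norm_lt_one (hf : HasFDerivAt f f' x)
    (hx : f x = x) (hf' : ‖f'‖ < 1) :
    ∃ q : ℝ, 0 ≤ q ∧ q < 1 ∧ ∃ r > 0, ∀ y ∈ ball x r, dist (f y) x ≤ q * dist y x := by
  obtain ⟨r, hr, hfr⟩ := Metric.eventually_nhds_iff_ball.1
    (hf.isLittleO.def (by linarith : 0 < (1 - ‖f'‖) / 2))
  refine ⟨(1 + ‖f'‖) / 2, by positivity, by linarith, r, hr, fun y hy => ?_⟩
  have hlin : f y - x = f' (y - x) + (f y - f x - f' (y - x)) := by rw [hx]; abel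
  rw [dist_eq_norm, dist_eq_norm, hlin]
  calc ‖f' (y - x) + (f y - f x - f' (y - x))‖
      ≤ ‖f'‖ * ‖y - x‖ + (1 - ‖f'‖) / 2 * ‖y - x‖ :=
        (norm_add_le _ _).trans (add_le_add (f'.le_opNorm _) (hfr y hy))
    _ = (1 + ‖f'‖) / 2 * ‖y - x‖ := by ring

theorem HasFDerivAt.exists_isOpen_tendsto_iterate (hf : HasFDerivAt f f' x) (hx : f x = x)
    (hf' : Tendsto (f' ^ ·) atTop (𝓝 0)) :
    ∃ U : Set E, IsOpen U ∧ x ∈ U ∧ ∀ y ∈ U, Tendsto (fun n => f^[n] y) atTop (𝓝 x) := by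
  obtain ⟨N, hN, hN0⟩ := ((tendsto_zero_iff_norm_tendsto_zero.1 hf').eventually_lt_const
    one_pos |>.and (eventually_ne_atTop 0)).exists
  obtain ⟨q, hq₀, hq₁, r, hr, hfr⟩ :=
    (hf.iterate hx N).exists_forall_dist_apply_le_of_norm_lt_one (Function.iterate_fixed hx N) hN
  refine ⟨ball x r, isOpen_ball, mem_ball_self hr, fun y hy => ?_⟩
  refine tendsto_of_forall_tendsto_mul_add hN0 fun j _ => ?_
  have hcont : Tendsto f^[j] (𝓝 x) (𝓝 x) := by
    simpa only [Function.iterate_fixed hx j] using (hf.continuousAt.iterate hx j).tendsto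
  have hsub := tendsto_iterate_of_forall_dist_apply_le hq₀ hq₁ hfr hy
  simpa only [Function.comp_def, add_comm _ j, Function.iterate_add_apply,
    Function.iterate_mul] using hcont.comp hsub

end LocalAttraction

theorem spectrum.tendsto_pow_atTop_nhds_zero {A : Type*} [NormedRing A] [NormedAlgebra ℂ A]
    [CompleteSpace A] {a : A} (ha : ∀ z ∈ spectrum ℂ a, ‖z‖ < 1) :
    Tendsto (a ^ ·) atTop (𝓝 0) := by
  nontriviality A
  have hρ : spectralRadius ℂ a < (1 : ℝ≥0) :=
    spectrum.spectralRadius_lt_of_forall_lt a fun z hz => by exact_mod_cast ha z hz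
  obtain ⟨r, hρr, hr1⟩ := ENNReal.lt_iff_exists_nnreal_btwn.1 hρ
  have hbound : ∀ᶠ n : ℕ in atTop, ‖a ^ n‖ ≤ (r : ℝ) ^ n := by
    filter_upwards [(spectrum.gelfand_formula a).eventually_lt_const hρr,
      eventually_ne_atTop 0] with n hn hn0
    rw [one_div, ENNReal.rpow_inv_lt_iff (by positivity), ENNReal.rpow_natCast] at hn
    exact_mod_cast hn.le
  exact squeeze_zero_norm' hbound
    (tendsto_pow_atTop_nhds_zero_of_lt_one r.coe_nonneg (by exact_mod_cast hr1))

theorem Matrix.tendsto_pow_atTop_nhds_zero {n : Type*} [Fintype n] [DecidableEq n]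
    (M : Matrix n n ℝ) (hM : ∀ z ∈ spectrum ℂ (M.map fun x => (x : ℂ)), ‖z‖ < 1) :
    Tendsto (M ^ ·) atTop (𝓝 0) := by
  -- any Banach algebra norm on complex matrices will do; its topology is the entrywise one
  let _ := Matrix.linftyOpNormedRing (n := n) (α := ℂ)
  let _ := Matrix.linftyOpNormedAlgebra (n := n) (R := ℂ) (α := ℂ)
  have hℂ : Tendsto (fun k => (M ^ k).map Complex.ofRealHom) atTop (𝓝 0) := by
    simp_rw [Matrix.map_pow]
    exact spectrum.tendsto_pow_atTop_nhds_zero hM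
  have hre := ((continuous_id.matrix_map Complex.continuous_re).tendsto 0).comp hℂ
  simpa [Function.comp_def, Matrix.map_map] using hre

theorem Matrix.tendsto_toEuclideanCLM_pow_atTop_nhds_zero {n : Type*} [Fintype n] [DecidableEq n]
    (M : Matrix n n ℝ) (hM : ∀ z ∈ spectrum ℂ (M.map fun x => (x : ℂ)), ‖z‖ < 1) :
    Tendsto (Matrix.toEuclideanCLM (𝕜 := ℝ) M ^ ·) atTop (𝓝 0) := by
  have hcont : Continuous (Matrix.toEuclideanCLM (𝕜 := ℝ) (n := n)) :=
    LinearMap.continuous_of_finiteDimensional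
      (Matrix.toEuclideanCLM (𝕜 := ℝ) (n := n)).toAlgEquiv.toLinearMap
  simp_rw [← map_pow]
  simpa [Function.comp_def] using (hcont.tendsto 0).comp (M.tendsto_pow_atTop_nhds_zero hM)

theorem spectrum.algebraMap_add_smul {𝕜 A : Type*} [Field 𝕜] [Ring A] [Algebra 𝕜 A] (a : A)
    (c : 𝕜) {k : 𝕜} (hk : k ≠ 0) :
    spectrum 𝕜 (algebraMap 𝕜 A c + k • a) = (fun μ => c + k * μ) '' spectrum 𝕜 a := by
  rw [← spectrum.singleton_add_eq, ← Units.val_mk0 hk, ← Units.smul_def,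
    spectrum.unit_smul_eq_smul, Set.singleton_add, ← Set.image_smul, Set.image_image]
  rfl

theorem Complex.eventually_norm_one_sub_mul_add_mul_lt_one {μ : ℂ} (hμ : μ.re < 1) :
    ∀ᶠ ρ : ℝ in 𝓝[>] 0, ‖(1 - ρ : ℂ) + ρ * μ‖ < 1 := by
  have hμ1 : 0 < ‖μ - 1‖ ^ 2 := by
    have : μ - 1 ≠ 0 := fun h => by simp [sub_eq_zero.1 h] at hμ
    positivity
  filter_upwards [Ioo_mem_nhdsGT (div_pos (by linarith : 0 < 2 * (1 - μ.re)) hμ1)] with ρ hρ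
  have hρ' : ρ * ‖μ - 1‖ ^ 2 < 2 * (1 - μ.re) := (lt_div_iff₀ hμ1).1 hρ.2
  have hsq : ‖(1 - ρ : ℂ) + ρ * μ‖ ^ 2 = 1 - ρ * (2 * (1 - μ.re) - ρ * ‖μ - 1‖ ^ 2) := by
    simp only [Complex.sq_norm, Complex.normSq_apply, Complex.add_re, Complex.add_im,
      Complex.mul_re, Complex.mul_im, Complex.sub_re, Complex.sub_im, Complex.one_re,
      Complex.one_im, Complex.ofReal_re, Complex.ofReal_im]
    ring
  refine (sq_lt_one_iff₀ (norm_nonneg _)).1 ?_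
  rw [hsq]
  nlinarith [hρ.1]

theorem exists_mem_Ioo_forall_norm_one_sub_mul_add_mul_lt_one {K : Set ℂ} (hK : K.Finite)
    (hre : ∀ μ ∈ K, μ.re < 1) :
    ∃ ρ ∈ Set.Ioo (0 : ℝ) 1, ∀ μ ∈ K, ‖(1 - ρ : ℂ) + ρ * μ‖ < 1 :=
  ((hK.eventually_all.2 fun μ hμ => Complex.eventually_norm_one_sub_mul_add_mul_lt_one
    (hre μ hμ)).and (Ioo_mem_nhdsGT one_pos)).exists.imp fun _ h => ⟨h.2, h.1⟩

/-- Theorem 5 of the paper: local convergence of Mann iterates.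
Let `T : ℝ^m → ℝ^m` have a fixed point `w*`, suppose `T` is (Fréchet) differentiable at
`w*` with Jacobian matrix `A`, and suppose every complex eigenvalue of `A` has real part
strictly less than `1`.  Then there are `ρ ∈ (0,1)` and an open set `U ∋ w*` such that for
every initial point `w 0 ∈ U` the Mann iterates `w (k+1) = (1 − ρ) • w k + ρ • T (w k)`
converge to `w*`. -/
theorem mann_local_convergence {m : ℕ}
    (T : EuclideanSpace ℝ (Fin m) → EuclideanSpace ℝ (Fin m))
    (wstar : EuclideanSpace ℝ (Fin m)) (hfix : T wstar = wstar)
    (A : Matrix (Fin m) (Fin m) ℝ)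
    (hderiv : HasFDerivAt T
      (LinearMap.toContinuousLinearMap (Matrix.toEuclideanLin A)) wstar)
    (heig : ∀ μ ∈ spectrum ℂ (A.map fun x => (x : ℂ)), μ.re < 1) :
    ∃ ρ ∈ Set.Ioo (0:ℝ) 1, ∃ U : Set (EuclideanSpace ℝ (Fin m)),
      IsOpen U ∧ wstar ∈ U ∧
        ∀ w : ℕ → EuclideanSpace ℝ (Fin m), w 0 ∈ U →
          (∀ k, w (k + 1) = (1 - ρ) • w k + ρ • T (w k)) →
          Filter.Tendsto w Filter.atTop (nhds wstar) := by
  obtain ⟨ρ, hρ, hρK⟩ := exists_mem_Ioo_forall_norm_one_sub_mul_add_mul_lt_one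
    (Matrix.finite_spectrum _) heig
  set M : Matrix (Fin m) (Fin m) ℝ := (1 - ρ) • 1 + ρ • A
  have hM : ∀ z ∈ spectrum ℂ (M.map fun x => (x : ℂ)), ‖z‖ < 1 := by
    have hMℂ : (M.map fun x => (x : ℂ)) = algebraMap ℂ _ (1 - ρ) + (ρ : ℂ) • A.map (↑) := by
      ext i j
      by_cases h : i = j <;> simp [M, h, Matrix.algebraMap_matrix_apply]
    rw [hMℂ, spectrum.algebraMap_add_smul _ _ (Complex.ofReal_ne_zero.2 hρ.1.ne')]
    rintro _ ⟨μ, hμ, rfl⟩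
    exact hρK μ hμ
  set S : EuclideanSpace ℝ (Fin m) → EuclideanSpace ℝ (Fin m) := fun w => (1 - ρ) • w + ρ • T w
  have hS : HasFDerivAt S (Matrix.toEuclideanCLM (𝕜 := ℝ) M) wstar := by
    refine (((hasFDerivAt_id wstar).const_smul (1 - ρ)).add (hderiv.const_smul ρ)).congr_fderiv ?_
    simp only [M, map_add, map_smul, map_one, ContinuousLinearMap.one_def, add_right_inj]
    rfl
  obtain ⟨U, hU, hwU, hconv⟩ := hS.exists_isOpen_tendsto_iterate
    (by simp [S, hfix, ← add_smul]) (M.tendsto_toEuclideanCLM_pow_atTop_nhds_zero hM)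
  refine ⟨ρ, hρ, U, hU, hwU, fun w hw0 hw => ?_⟩
  have horbit : w = fun k => S^[k] (w 0) := funext fun k => by
    induction k with
    | zero => rfl
    | succ k ih => rw [hw, ih, Function.iterate_succ_apply']
  exact horbit ▸ hconv _ hw0
end

section
/- Let S : ℝ^m → ℝ^m have a fixed point w* and be differentiable at w*, and suppose all (complex) eigenvalues of the Jacobian A of S at w* have modulus at most r for some r < 1. Then there exist an open neighborhood U of w*, a constant β ∈ (r, 1), and an invertible linear change of coordinates in which the iterates of S starting in U converge geometrically to w*: in those coordinates, ‖S^k(w) − w*‖ ≤ β^k ‖w − w*‖ for all w ∈ U and k ≥ 0; in particular S^k(w^0) → w* for every w^0 ∈ U. -/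
/-!
Gelfand's formula applied to the complexified Jacobian gives `N > 0` with `‖A ^ N‖ ≤ β₁ ^ N` for
any `β₁` strictly between the spectral bound `r` and `1`. Then `A` contracts by the factor `β₁` the
Lyapunov norm `‖x‖_*² = ∑_{i<N} β₁^{-2i} ‖Aⁱ x‖²`, which is Euclidean: it is `‖L x‖` for the square
root `L` of the positive definite Gram operator `∑ (Aⁱ)† Aⁱ / β₁^{2i}`. In the coordinates given by
`L` the derivative of `S` at `w*` has norm at most `β₁ < β`, so near `w*` the map `S` contracts
the distance to `w*` by `β`, and the estimate iterates since the ball around `w*` is invariant.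
-/

open Filter Topology Metric
open scoped Matrix.Norms.L2Operator MatrixOrder

theorem spectralRadius_le_ofReal {𝕜 A : Type*} [NormedField 𝕜] [Ring A] [Algebra 𝕜 A] {a : A}
    {r : ℝ} (h : ∀ μ ∈ spectrum 𝕜 a, ‖μ‖ ≤ r) : spectralRadius 𝕜 a ≤ ENNReal.ofReal r :=
  iSup₂_le fun μ hμ ↦ by
    rw [← enorm_eq_nnnorm, ← ofReal_norm]
    exact ENNReal.ofReal_le_ofReal (h μ hμ)

theorem spectrum.eventually_norm_pow_le {A : Type*} [NormedRing A] [NormedAlgebra ℂ A]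
    [CompleteSpace A] {a : A} {c : ℝ} (h : spectralRadius ℂ a < ENNReal.ofReal c) :
    ∀ᶠ n in atTop, ‖a ^ n‖ ≤ c ^ n := by
  filter_upwards [(pow_norm_pow_one_div_tendsto_nhds_spectralRadius a).eventually_lt_const h,
    eventually_ne_atTop 0] with n hn hn0
  have hroot := ((ENNReal.ofReal_lt_ofReal_iff'.mp hn).1).le
  rw [one_div] at hroot
  calc ‖a ^ n‖ = (‖a ^ n‖ ^ (n⁻¹ : ℝ)) ^ n := (Real.rpow_inv_natCast_pow (norm_nonneg _) hn0).symm
    _ ≤ c ^ n := pow_le_pow_left₀ (by positivity) hroot n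

theorem EuclideanSpace.norm_ofReal {n : Type*} [Fintype n] (x : EuclideanSpace ℝ n) :
    ‖(WithLp.toLp 2 fun i ↦ (x i : ℂ) : EuclideanSpace ℂ n)‖ = ‖x‖ := by
  simp [EuclideanSpace.norm_eq]

theorem Matrix.norm_toEuclideanCLM_le_norm_map_ofReal {n : Type*} [Fintype n] [DecidableEq n]
    (M : Matrix n n ℝ) :
    ‖toEuclideanCLM (n := n) (𝕜 := ℝ) M‖ ≤ ‖M.map ((↑) : ℝ → ℂ)‖ := by
  refine ContinuousLinearMap.opNorm_le_bound _ (norm_nonneg _) fun x ↦ ?_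
  have hmap : toEuclideanCLM (n := n) (𝕜 := ℂ) (M.map (↑)) (WithLp.toLp 2 fun i ↦ (x i : ℂ)) =
      WithLp.toLp 2 fun i ↦ ((toEuclideanCLM (n := n) (𝕜 := ℝ) M x) i : ℂ) := by
    ext i
    exact (Complex.ofRealHom.map_mulVec M x.ofLp i).symm
  rw [← EuclideanSpace.norm_ofReal, ← hmap, ← EuclideanSpace.norm_ofReal x]
  exact ContinuousLinearMap.le_opNorm _ _

theorem Matrix.exists_pow_norm_toEuclideanCLM_le {n : Type*} [Fintype n] [DecidableEq n]
    (A : Matrix n n ℝ) {r β : ℝ} (heig : ∀ μ ∈ spectrum ℂ (A.map ((↑) : ℝ → ℂ)), ‖μ‖ ≤ r)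
    (hrβ : r < β) (hβ : 0 < β) :
    ∃ N, 0 < N ∧ ‖toEuclideanCLM (n := n) (𝕜 := ℝ) A ^ N‖ ≤ β ^ N := by
  have hspec : spectralRadius ℂ (A.map ((↑) : ℝ → ℂ)) < ENNReal.ofReal β :=
    (spectralRadius_le_ofReal heig).trans_lt ((ENNReal.ofReal_lt_ofReal_iff hβ).mpr hrβ)
  obtain ⟨N, hN, hN0⟩ :=
    ((spectrum.eventually_norm_pow_le hspec).and (eventually_gt_atTop 0)).exists
  refine ⟨N, hN0, ?_⟩
  calc ‖toEuclideanCLM (n := n) (𝕜 := ℝ) A ^ N‖ ≤ ‖(A ^ N).map ((↑) : ℝ → ℂ)‖ := by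
        rw [← map_pow]; exact norm_toEuclideanCLM_le_norm_map_ofReal _
    _ = ‖A.map ((↑) : ℝ → ℂ) ^ N‖ := congrArg norm (map_pow Complex.ofRealHom.mapMatrix A N)
    _ ≤ β ^ N := hN

theorem Finset.sum_range_succ_le_sum_range {α : Type*} [AddCommMonoid α] [PartialOrder α]
    [IsOrderedCancelAddMonoid α] {v : ℕ → α} {N : ℕ} (h : v N ≤ v 0) :
    ∑ i ∈ range N, v (i + 1) ≤ ∑ i ∈ range N, v i := by
  refine le_of_add_le_add_right (a := v 0) ?_
  rw [← sum_range_succ', sum_range_succ]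
  gcongr

namespace ContinuousLinearMap

variable {𝕜 E : Type*} [NontriviallyNormedField 𝕜] [NormedAddCommGroup E] [NormedSpace 𝕜 E]

noncomputable def adaptedNormSq (T : E →L[𝕜] E) (β : ℝ) (N : ℕ) (x : E) : ℝ :=
  ∑ i ∈ Finset.range N, (‖(T ^ i) x‖ / β ^ i) ^ 2

theorem sq_norm_le_adaptedNormSq (T : E →L[𝕜] E) (β : ℝ) {N : ℕ} (hN : 0 < N) (x : E) :
    ‖x‖ ^ 2 ≤ T.adaptedNormSq β N x := by
  unfold adaptedNormSq
  simpa only [pow_zero, one_apply_eq_self, div_one] using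
    Finset.single_le_sum (fun i _ ↦ sq_nonneg (‖(T ^ i) x‖ / β ^ i)) (Finset.mem_range.mpr hN)

theorem adaptedNormSq_apply_le {T : E →L[𝕜] E} {β : ℝ} (hβ : 0 < β) {N : ℕ}
    (hTN : ‖T ^ N‖ ≤ β ^ N) (x : E) :
    T.adaptedNormSq β N (T x) ≤ β ^ 2 * T.adaptedNormSq β N x := by
  set v : ℕ → ℝ := fun i ↦ (‖(T ^ i) x‖ / β ^ i) ^ 2
  have hv : v N ≤ v 0 := by
    simp only [v, pow_zero, one_apply_eq_self, div_one]
    gcongr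
    rw [div_le_iff₀' (by positivity)]
    exact (T ^ N).le_of_opNorm_le hTN x
  have hshift : ∀ i, (‖(T ^ i) (T x)‖ / β ^ i) ^ 2 = β ^ 2 * v (i + 1) := fun i ↦ by
    rw [← mul_apply_eq_comp, ← pow_succ]
    simp only [v, pow_succ β i]
    field_simp
  calc T.adaptedNormSq β N (T x) = β ^ 2 * ∑ i ∈ Finset.range N, v (i + 1) := by
        simp only [adaptedNormSq, hshift, Finset.mul_sum]
    _ ≤ β ^ 2 * T.adaptedNormSq β N x :=
        mul_le_mul_of_nonneg_left (Finset.sum_range_succ_le_sum_range hv) (sq_nonneg β)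

end ContinuousLinearMap

namespace EuclideanSpace

variable {𝕜 n : Type*} [RCLike 𝕜] [Fintype n] [DecidableEq n]

theorem exists_adjoint_comp_self_eq {G : EuclideanSpace 𝕜 n →L[𝕜] EuclideanSpace 𝕜 n}
    (hG : G.IsPositive) :
    ∃ P : EuclideanSpace 𝕜 n →L[𝕜] EuclideanSpace 𝕜 n, ContinuousLinearMap.adjoint P ∘L P = G := by
  -- The square root is taken of the matrix, where the continuous functional calculus lives.
  set M := (Matrix.toEuclideanCLM (n := n) (𝕜 := 𝕜)).symm G
  have hM : 0 ≤ M := by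
    refine Matrix.PosSemidef.nonneg ?_
    rw [← Matrix.isPositive_toEuclideanLin_iff, ← Matrix.coe_toEuclideanCLM_eq_toEuclideanLin,
      StarAlgEquiv.apply_symm_apply]
    exact hG
  refine ⟨Matrix.toEuclideanCLM (n := n) (𝕜 := 𝕜) (CFC.sqrt M), ?_⟩
  rw [← ContinuousLinearMap.star_eq_adjoint, ← map_star, (CFC.sqrt_nonneg M).isSelfAdjoint.star_eq,
    ← ContinuousLinearMap.mul_def, ← map_mul, CFC.sqrt_mul_sqrt_self M,
    StarAlgEquiv.apply_symm_apply]

theorem exists_norm_sq_eq_sum {ι F : Type*} [NormedAddCommGroup F] [InnerProductSpace 𝕜 F]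
    [CompleteSpace F] (s : Finset ι) (M : ι → EuclideanSpace 𝕜 n →L[𝕜] F) :
    ∃ P : EuclideanSpace 𝕜 n →L[𝕜] EuclideanSpace 𝕜 n,
      ∀ x, ‖P x‖ ^ 2 = ∑ i ∈ s, ‖M i x‖ ^ 2 := by
  obtain ⟨P, hP⟩ := exists_adjoint_comp_self_eq <| ContinuousLinearMap.isPositive_sum s
    fun i _ ↦ (M i).isPositive_adjoint_comp_self
  refine ⟨P, fun x ↦ ?_⟩
  simp only [P.apply_norm_sq_eq_inner_adjoint_left, hP, (M _).apply_norm_sq_eq_inner_adjoint_left,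
    sum_apply, sum_inner, map_sum]

theorem exists_conj_norm_le (T : EuclideanSpace 𝕜 n →L[𝕜] EuclideanSpace 𝕜 n) {β : ℝ}
    (hβ : 0 < β) {N : ℕ} (hN : 0 < N) (hTN : ‖T ^ N‖ ≤ β ^ N) :
    ∃ L : EuclideanSpace 𝕜 n ≃L[𝕜] EuclideanSpace 𝕜 n,
      ‖(L : EuclideanSpace 𝕜 n →L[𝕜] EuclideanSpace 𝕜 n) ∘L T ∘L
        (L.symm : EuclideanSpace 𝕜 n →L[𝕜] EuclideanSpace 𝕜 n)‖ ≤ β := by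
  obtain ⟨P, hP⟩ := exists_norm_sq_eq_sum (Finset.range N) fun i ↦ ((β ^ i : ℝ) : 𝕜)⁻¹ • T ^ i
  replace hP : ∀ x, ‖P x‖ ^ 2 = T.adaptedNormSq β N x := fun x ↦ by
    simp only [hP, ContinuousLinearMap.adaptedNormSq, smul_apply, norm_smul, norm_inv,
      RCLike.norm_ofReal, abs_of_pos (pow_pos hβ _), inv_mul_eq_div]
  have hinj : Function.Injective (P : EuclideanSpace 𝕜 n →ₗ[𝕜] EuclideanSpace 𝕜 n) := by
    refine (injective_iff_map_eq_zero _).mpr fun x hx ↦ norm_eq_zero.mp ?_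
    have hPx : ‖P x‖ = 0 := by simpa using hx
    nlinarith [T.sq_norm_le_adaptedNormSq β hN x, hP x, norm_nonneg x]
  set L := (LinearEquiv.ofInjectiveEndo _ hinj).toContinuousLinearEquiv
  have hL : ∀ x, ‖L x‖ ^ 2 = T.adaptedNormSq β N x := hP
  refine ⟨L, ContinuousLinearMap.opNorm_le_bound _ hβ.le fun y ↦ ?_⟩
  refine (pow_le_pow_iff_left₀ (norm_nonneg _) (by positivity) two_ne_zero).mp ?_
  calc ‖L (T (L.symm y))‖ ^ 2 ≤ β ^ 2 * ‖L (L.symm y)‖ ^ 2 := by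
        simpa only [hL] using ContinuousLinearMap.adaptedNormSq_apply_le hβ hTN (L.symm y)
    _ = (β * ‖y‖) ^ 2 := by rw [L.apply_symm_apply, mul_pow]

end EuclideanSpace

theorem HasFDerivAt.eventually_norm_sub_le {𝕜 E F : Type*} [NontriviallyNormedField 𝕜]
    [NormedAddCommGroup E] [NormedSpace 𝕜 E] [NormedAddCommGroup F] [NormedSpace 𝕜 F]
    {f : E → F} {f' : E →L[𝕜] F} {x : E} (hf : HasFDerivAt f f' x) {β : ℝ} (hβ : ‖f'‖ < β) :
    ∀ᶠ y in 𝓝 x, ‖f y - f x‖ ≤ β * ‖y - x‖ := by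
  filter_upwards [hf.isLittleO.def (sub_pos.mpr hβ)] with y hy
  calc ‖f y - f x‖ ≤ ‖f' (y - x)‖ + ‖f y - f x - f' (y - x)‖ := norm_le_insert' _ _
    _ ≤ ‖f'‖ * ‖y - x‖ + (β - ‖f'‖) * ‖y - x‖ := add_le_add (f'.le_opNorm _) hy
    _ = β * ‖y - x‖ := by ring

theorem dist_iterate_le_pow_mul {X : Type*} [PseudoMetricSpace X] {F : X → X} {p : X}
    {β δ : ℝ} (hβ₀ : 0 ≤ β) (hβ₁ : β ≤ 1) (hF : ∀ y ∈ ball p δ, dist (F y) p ≤ β * dist y p)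
    {y : X} (hy : y ∈ ball p δ) (k : ℕ) : dist (F^[k] y) p ≤ β ^ k * dist y p := by
  induction k with
  | zero => simp
  | succ k ih =>
    have hk : F^[k] y ∈ ball p δ :=
      (ih.trans (mul_le_of_le_one_left dist_nonneg (pow_le_one₀ hβ₀ hβ₁))).trans_lt hy
    rw [Function.iterate_succ_apply', pow_succ', mul_assoc]
    exact (hF _ hk).trans (mul_le_mul_of_nonneg_left ih hβ₀)

theorem HasFDerivAt.exists_ball_iterate_tendsto {𝕜 E : Type*} [NontriviallyNormedField 𝕜]
    [NormedAddCommGroup E] [NormedSpace 𝕜 E] {F : E → E} {F' : E →L[𝕜] E} {p : E}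
    (hF : HasFDerivAt F F' p) (hp : F p = p) {β : ℝ} (hF' : ‖F'‖ < β) (hβ : β < 1) :
    ∃ δ > 0, ∀ y ∈ ball p δ,
      (∀ k, dist (F^[k] y) p ≤ β ^ k * dist y p) ∧ Tendsto (fun k ↦ F^[k] y) atTop (𝓝 p) := by
  obtain ⟨δ, hδ, hball⟩ := Metric.eventually_nhds_iff_ball.mp (hF.eventually_norm_sub_le hF')
  have hβ₀ : 0 ≤ β := (norm_nonneg _).trans hF'.le
  have hcontr : ∀ y ∈ ball p δ, dist (F y) p ≤ β * dist y p := fun y hy ↦ by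
    simpa only [dist_eq_norm, hp] using hball y hy
  refine ⟨δ, hδ, fun y hy ↦ ?_⟩
  have hbound := dist_iterate_le_pow_mul hβ₀ hβ.le hcontr hy
  refine ⟨hbound, tendsto_iff_dist_tendsto_zero.mpr (squeeze_zero (fun _ ↦ dist_nonneg) hbound ?_)⟩
  simpa using (tendsto_pow_atTop_nhds_zero_of_lt_one hβ₀ hβ).mul_const (dist y p)

/-- Let `S : ℝ^m → ℝ^m` have a fixed point `w*`, be (Fréchet)
differentiable at `w*` with Jacobian matrix `A`, and suppose all complex eigenvalues of
`A` have modulus at most `r` for some `r < 1`.  Then there exist an open neighborhood `U`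
of `w*`, a constant `β ∈ (r, 1)`, and an invertible linear change of coordinates
`L : ℝ^m ≃ₗ ℝ^m` in which the iterates of `S` starting in `U` converge geometrically to
`w*`: `‖L (S^[k] w − w*)‖ ≤ β^k ‖L (w − w*)‖` for all `w ∈ U` and `k ≥ 0`; in particular
`S^[k] w⁰ → w*` for every `w⁰ ∈ U`. -/
theorem local_geometric_convergence_of_contraction_spectrum {m : ℕ}
    (S : EuclideanSpace ℝ (Fin m) → EuclideanSpace ℝ (Fin m))
    (wstar : EuclideanSpace ℝ (Fin m)) (hfix : S wstar = wstar)
    (A : Matrix (Fin m) (Fin m) ℝ)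
    (hderiv : HasFDerivAt S
      (LinearMap.toContinuousLinearMap (Matrix.toEuclideanLin A)) wstar)
    (r : ℝ) (hr : r < 1)
    (heig : ∀ μ ∈ spectrum ℂ (A.map fun x => (x : ℂ)), ‖μ‖ ≤ r) :
    ∃ U : Set (EuclideanSpace ℝ (Fin m)), IsOpen U ∧ wstar ∈ U ∧
      ∃ β, r < β ∧ β < 1 ∧
        ∃ L : EuclideanSpace ℝ (Fin m) ≃ₗ[ℝ] EuclideanSpace ℝ (Fin m),
          (∀ w ∈ U, ∀ k : ℕ, ‖L (S^[k] w - wstar)‖ ≤ β ^ k * ‖L (w - wstar)‖) ∧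
          ∀ w0 ∈ U, Filter.Tendsto (fun k => S^[k] w0) Filter.atTop (nhds wstar) := by
  obtain ⟨β₁, hrβ₁, hβ₁⟩ := exists_between (max_lt hr one_pos)
  obtain ⟨β, hβ₁β, hβ⟩ := exists_between hβ₁
  have hβ₁pos : 0 < β₁ := (le_max_right r 0).trans_lt hrβ₁
  set T := Matrix.toEuclideanCLM (n := Fin m) (𝕜 := ℝ) A
  obtain ⟨N, hN, hTN⟩ :=
    A.exists_pow_norm_toEuclideanCLM_le heig ((le_max_left r 0).trans_lt hrβ₁) hβ₁pos
  obtain ⟨L, hL⟩ := EuclideanSpace.exists_conj_norm_le T hβ₁pos hN hTN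
  set F := L ∘ S ∘ L.symm
  have hF : HasFDerivAt F ((L : _ →L[ℝ] _) ∘L T ∘L (L.symm : _ →L[ℝ] _)) (L wstar) := by
    refine L.hasFDerivAt.comp _ (HasFDerivAt.comp _ ?_ L.symm.hasFDerivAt)
    rw [L.symm_apply_apply]
    exact hderiv
  obtain ⟨δ, hδ, hball⟩ :=
    hF.exists_ball_iterate_tendsto (by simp [F, hfix]) (hL.trans_lt hβ₁β) hβ
  have hconj : ∀ k w, L (S^[k] w) = F^[k] (L w) :=
    fun k ↦ Function.Semiconj.iterate_right (fun w ↦ by simp [F]) k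
  refine ⟨L ⁻¹' ball (L wstar) δ, isOpen_ball.preimage L.continuous, by simpa using hδ,
    β, (le_max_left r 0).trans_lt (hrβ₁.trans hβ₁β), hβ, L.toLinearEquiv,
    fun w hw k ↦ ?_, fun w hw ↦ ?_⟩
  · simpa [hconj, dist_eq_norm] using (hball (L w) hw).1 k
  · have hS : (fun k ↦ S^[k] w) = L.symm ∘ fun k ↦ F^[k] (L w) :=
      funext fun k ↦ by simp [← hconj]
    simpa [hS] using (L.symm.continuous.tendsto _).comp (hball (L w) hw).2
end
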